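/- Let α, β ∈ ℂ* and suppose the kernel Δ of the homomorphism ℤ² → ℂ*, (i,j) ↦ αⁱβʲ, is generated by (k,0) for some k ∈ ℤ. Let m, n ∈ ℤ with mn ≠ 0 and |m| ≠ |n|. Then there is no matrix [[a,b],[c,d]] ∈ GL(2,ℤ) with α^{ma}β^{mb} = αⁿ and α^{mc}β^{md} = βⁿ. -/

import Mathlib

/-- let `α, β ∈ ℂ*` with the kernel of `(i,j) ↦ αⁱβʲ` generated by
`(k,0)`, and let `m, n ∈ ℤ` with `mn ≠ 0`, `|m| ≠ |n|`. Then there is no matrix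
`[[a,b],[c,d]] ∈ GL(2,ℤ)` with `α^{ma}β^{mb} = αⁿ` and `α^{mc}β^{md} = βⁿ`. -/
theorem stmt4 (α β : ℂ) (hα : α ≠ 0) (hβ : β ≠ 0) (k : ℤ)
    (hker : ∀ i j : ℤ, α ^ i * β ^ j = 1 ↔ ∃ t : ℤ, i = t * k ∧ j = 0)
    (m n : ℤ) (hmn : m * n ≠ 0) (habs : |m| ≠ |n|) :
    ¬ ∃ a b c d : ℤ, (a * d - b * c = 1 ∨ a * d - b * c = -1) ∧
        α ^ (m * a) * β ^ (m * b) = α ^ n ∧ α ^ (m * c) * β ^ (m * d) = β ^ n := by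
  rintro ⟨a, b, c, d, hdet, h1, h2⟩
  have hm : m ≠ 0 := fun h => hmn (by simp [h])
  have e1 : α ^ (m * a - n) * β ^ (m * b) = 1 := by
    rw [zpow_sub₀ hα, div_mul_eq_mul_div, h1, div_self (zpow_ne_zero _ hα)]
  have e2 : α ^ (m * c) * β ^ (m * d - n) = 1 := by
    rw [zpow_sub₀ hβ, mul_div_assoc', h2, div_self (zpow_ne_zero _ hβ)]
  obtain ⟨t1, -, hb⟩ := (hker _ _).mp e1
  obtain ⟨t2, -, hd⟩ := (hker _ _).mp e2
  have hb0 : b = 0 := by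
    rcases mul_eq_zero.mp hb with h | h
    · exact absurd h hm
    · exact h
  have hdn : m * d = n := by omega
  have had : a * d = 1 ∨ a * d = -1 := by
    rcases hdet with h | h <;> [left; right] <;> simp [hb0] at h <;> omega
  have hd1 : d = 1 ∨ d = -1 := by
    apply Int.isUnit_iff.mp
    rcases had with h | h
    · exact IsUnit.of_mul_eq_one (a := d) a (by linarith [mul_comm a d])
    · exact IsUnit.of_mul_eq_one (a := d) (-a) (by linarith [mul_comm a d])
  rcases hd1 with h | h <;> rw [h] at hdn
  · have : m = n := by omega
    exact habs (by rw [this])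
  · have : -m = n := by omega
    exact habs (by rw [← this, abs_neg])
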